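/- Let 0 < α < 1, a, b ∈ ℝ with b ≠ 0, C₁, C₂ ∈ ℝ, and set λ = a + ib. Define x(t) = C₁ · Re(E_α(λ t^α)) + C₂ · Im(E_α(λ t^α)) and y(t) = −C₁ · Im(E_α(λ t^α)) + C₂ · Re(E_α(λ t^α)). Then x(0) = C₁, y(0) = C₂, and for every t > 0 the Caputo derivatives satisfy (₀^C D_t^α x)(t) = a·x(t) + b·y(t) and (₀^C D_t^α y)(t) = −b·x(t) + a·y(t). -/

import Mathlib

open MeasureTheory intervalIntegral

/-- The two-parameter Mittag-Leffler function `E_{α,β}(z) = ∑_{k=0}^∞ z^k / Γ(αk + β)`. -/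
noncomputable def mittagLeffler (α β : ℝ) (z : ℂ) : ℂ :=
  ∑' k : ℕ, z ^ k / Complex.Gamma (α * k + β)

/-- The Caputo fractional derivative of order `α ∈ (0,1)` of a real-valued function
(lower terminal `0`): `(₀^C D_t^α f)(t) = (1/Γ(1−α)) ∫₀^t (t−τ)^{−α} f′(τ) dτ`. -/
noncomputable def caputoDerivReal (α : ℝ) (f : ℝ → ℝ) (t : ℝ) : ℝ :=
  (1 / Real.Gamma (1 - α)) *
    ∫ τ in (0 : ℝ)..t, (t - τ) ^ (-α) * deriv f τ

/-!
The series `E_α(λ t^α) = ∑ₖ λ^k t^{αk} / Γ(αk+1)` converges for all `t ≥ 0` (ratio test: by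
log-convexity of `Γ`, `Γ(x+1+α) ≥ x^α Γ(x+1)`) and may be differentiated termwise for `t > 0`.
By the Beta integral the Caputo derivative of `t^p` is `Γ(p+1)/Γ(p+1-α) t^{p-α}`, so the Caputo
derivative maps the `(k+1)`-st term to `λ` times the `k`-th one; the norms of these termwise
integrals form the same series at `‖λ‖`, which justifies exchanging sum and integral. Hence
`D^α E_α(λ t^α) = λ E_α(λ t^α)`, and with `c = C₁ - i C₂` we have `x = Re (c E)`, `y = Re (i c E)`,
so the two equations are the real parts of `D^α (c E) = λ c E` and `D^α (i c E) = λ i c E`.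
-/

open Real Set Filter Topology

theorem Real.rpow_mul_Gamma_add_one_le_Gamma_add_one_add {x s : ℝ} (hx : 0 < x) (hs : 0 < s) :
    x ^ s * Gamma (x + 1) ≤ Gamma (x + 1 + s) := by
  have hΓ : 0 < Gamma x := Gamma_pos_of_pos hx
  -- slopes of the convex function `log ∘ Γ` on `[x, x+1]` and `[x+1, x+1+s]`; the first is `log x`
  have hslope := convexOn_log_Gamma.slope_mono_adjacent (x := x) (y := x + 1) (z := x + 1 + s)
    (mem_Ioi.2 hx) (mem_Ioi.2 (by linarith)) (by linarith) (by linarith)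
  simp only [Function.comp_apply, Gamma_add_one hx.ne', log_mul hx.ne' hΓ.ne',
    add_sub_cancel_left, add_sub_cancel_right, div_one, le_div_iff₀ hs] at hslope
  rw [← log_le_log_iff (by positivity) (Gamma_pos_of_pos (by linarith)),
    log_mul (by positivity) (Gamma_pos_of_pos (by linarith)).ne', log_rpow hx,
    Gamma_add_one hx.ne', log_mul hx.ne' hΓ.ne']
  linarith

theorem summable_pow_div_Gamma_mul_add_one {α : ℝ} (hα : 0 < α) (x : ℝ) :
    Summable fun k : ℕ => x ^ k / Gamma (α * k + 1) := by
  have hgrowth : Tendsto (fun k : ℕ => (α * k) ^ α) atTop atTop :=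
    (tendsto_rpow_atTop hα).comp (tendsto_natCast_atTop_atTop.const_mul_atTop hα)
  refine summable_of_ratio_norm_eventually_le (r := 1 / 2) (by norm_num) ?_
  filter_upwards [hgrowth.eventually_ge_atTop (2 * |x|), eventually_gt_atTop 0]
    with k hk hk0
  have hαk : 0 < α * k := by positivity
  have hΓ : 0 < Gamma (α * k + 1) := Gamma_pos_of_pos (by positivity)
  have hstep : (α * k) ^ α * Gamma (α * k + 1) ≤ Gamma (α * ↑(k + 1) + 1) := by
    convert rpow_mul_Gamma_add_one_le_Gamma_add_one_add hαk hα using 2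
    push_cast; ring
  have hΓ' : 0 < Gamma (α * ↑(k + 1) + 1) := Gamma_pos_of_pos (by positivity)
  rw [norm_div, norm_div, norm_pow, norm_pow, Real.norm_of_nonneg hΓ.le,
    Real.norm_of_nonneg hΓ'.le, div_le_iff₀ hΓ', pow_succ]
  calc ‖x‖ ^ k * ‖x‖ ≤ ‖x‖ ^ k * ((α * k) ^ α / 2) :=
        mul_le_mul_of_nonneg_left (by rw [Real.norm_eq_abs]; linarith) (by positivity)
    _ = 1 / 2 * (‖x‖ ^ k / Gamma (α * k + 1)) * ((α * k) ^ α * Gamma (α * k + 1)) := by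
        field_simp
    _ ≤ 1 / 2 * (‖x‖ ^ k / Gamma (α * k + 1)) * Gamma (α * ↑(k + 1) + 1) := by gcongr

theorem Real.integral_rpow_mul_sub_rpow {p q t : ℝ} (hp : 0 < p) (hq : 0 < q) (ht : 0 < t) :
    ∫ τ in (0 : ℝ)..t, τ ^ (p - 1) * (t - τ) ^ (q - 1) =
      t ^ (p + q - 1) * (Gamma p * Gamma q / Gamma (p + q)) := by
  have hcast : ((∫ τ in (0 : ℝ)..t, τ ^ (p - 1) * (t - τ) ^ (q - 1) : ℝ) : ℂ) =
      ∫ τ in (0 : ℝ)..t, (τ : ℂ) ^ ((p : ℂ) - 1) * ((t : ℂ) - τ) ^ ((q : ℂ) - 1) := by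
    rw [← intervalIntegral.integral_ofReal]
    refine intervalIntegral.integral_congr fun τ hτ => ?_
    rw [uIcc_of_le ht.le] at hτ
    push_cast
    rw [Complex.ofReal_cpow hτ.1, Complex.ofReal_cpow (sub_nonneg.2 hτ.2)]
    push_cast
    ring
  have hβ : Complex.betaIntegral p q =
      Complex.Gamma p * Complex.Gamma q / Complex.Gamma (p + q) := by
    rw [Complex.Gamma_mul_Gamma_eq_betaIntegral (by simpa using hp) (by simpa using hq),
      mul_div_cancel_left₀]
    exact Complex.Gamma_ne_zero_of_re_pos (by simp; positivity)
  rw [Complex.betaIntegral_scaled _ _ ht, hβ] at hcast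
  apply Complex.ofReal_injective
  rw [hcast, ← Complex.ofReal_add, Complex.Gamma_ofReal, Complex.Gamma_ofReal,
    Complex.Gamma_ofReal, Complex.ofReal_mul, Complex.ofReal_cpow ht.le]
  push_cast
  ring_nf

theorem integral_sub_rpow_neg_mul_deriv_rpow {α p t : ℝ} (hα : α < 1) (hp : 0 < p) (ht : 0 < t) :
    ∫ τ in (0 : ℝ)..t, (t - τ) ^ (-α) * (p * τ ^ (p - 1)) =
      Gamma (1 - α) * (Gamma (p + 1) / Gamma (p + 1 - α) * t ^ (p - α)) := by
  have hβ := Real.integral_rpow_mul_sub_rpow hp (sub_pos.2 hα) ht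
  simp only [sub_sub_cancel_left, ← add_sub_assoc] at hβ
  rw [show (fun τ => (t - τ) ^ (-α) * (p * τ ^ (p - 1))) =
      fun τ => p * (τ ^ (p - 1) * (t - τ) ^ (-α)) by ext; ring,
    intervalIntegral.integral_const_mul, hβ, Gamma_add_one hp.ne']
  ring_nf

theorem intervalIntegrable_sub_rpow_neg_mul_deriv_rpow {α p t : ℝ} (hα : α < 1) (hp : 0 < p)
    (ht : 0 < t) :
    IntervalIntegrable (fun τ => (t - τ) ^ (-α) * (p * τ ^ (p - 1))) volume 0 t := by
  refine intervalIntegrable_of_integral_ne_zero ?_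
  rw [integral_sub_rpow_neg_mul_deriv_rpow hα hp ht]
  have := Gamma_pos_of_pos (sub_pos.2 hα)
  have := Gamma_pos_of_pos (by linarith : 0 < p + 1)
  have := Gamma_pos_of_pos (by linarith : 0 < p + 1 - α)
  positivity

theorem caputoDerivReal_eq_tsum {α t : ℝ} (hα : α < 1) (ht : 0 < t) {f : ℝ → ℝ}
    {a p : ℕ → ℝ} (hp : ∀ k, 0 < p k)
    (hf : ∀ τ ∈ Ioc 0 t, deriv f τ = ∑' k, a k * (p k * τ ^ (p k - 1)))
    (hsum : Summable fun k => |a k| * (Gamma (p k + 1) / Gamma (p k + 1 - α) * t ^ (p k - α))) :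
    caputoDerivReal α f t =
      ∑' k, a k * (Gamma (p k + 1) / Gamma (p k + 1 - α) * t ^ (p k - α)) := by
  set K : ℕ → ℝ → ℝ := fun k τ => (t - τ) ^ (-α) * (p k * τ ^ (p k - 1))
  set V : ℕ → ℝ := fun k => Gamma (p k + 1) / Gamma (p k + 1 - α) * t ^ (p k - α)
  have hK : ∀ k (c : ℝ), ∫ τ in Ioc 0 t, c * K k τ = Gamma (1 - α) * (c * V k) := by
    intro k c
    rw [MeasureTheory.integral_const_mul, ← intervalIntegral.integral_of_le ht.le,
      integral_sub_rpow_neg_mul_deriv_rpow hα (hp k) ht]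
    ring
  have hint : ∀ k, IntegrableOn (fun τ => a k * K k τ) (Ioc 0 t) :=
    fun k => ((intervalIntegrable_iff_integrableOn_Ioc_of_le ht.le).1
      (intervalIntegrable_sub_rpow_neg_mul_deriv_rpow hα (hp k) ht)).const_mul (a k)
  have hnorm : ∀ k, ∫ τ in Ioc 0 t, ‖a k * K k τ‖ = Gamma (1 - α) * (|a k| * V k) := by
    intro k
    rw [← hK]
    refine setIntegral_congr_fun measurableSet_Ioc fun τ hτ => ?_
    have : 0 ≤ K k τ := mul_nonneg (rpow_nonneg (sub_nonneg.2 hτ.2) _)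
      (mul_nonneg (hp k).le (rpow_nonneg hτ.1.le _))
    rw [norm_mul, Real.norm_eq_abs, Real.norm_of_nonneg this]
  calc caputoDerivReal α f t = 1 / Gamma (1 - α) * ∫ τ in Ioc 0 t, ∑' k, a k * K k τ := by
        rw [caputoDerivReal, intervalIntegral.integral_of_le ht.le]
        congr 1
        refine setIntegral_congr_fun measurableSet_Ioc fun τ hτ => ?_
        rw [hf τ hτ, ← tsum_mul_left]
        exact tsum_congr fun k => by ring
    _ = 1 / Gamma (1 - α) * ∑' k, ∫ τ in Ioc 0 t, a k * K k τ := by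
        rw [integral_tsum_of_summable_integral_norm hint
          (by simpa only [hnorm] using hsum.mul_left (Gamma (1 - α)))]
    _ = ∑' k, a k * V k := by
        simp only [hK, tsum_mul_left]
        field_simp [(Gamma_pos_of_pos (sub_pos.2 hα)).ne']

noncomputable def mittagLefflerCoeff (α : ℝ) (lam : ℂ) (k : ℕ) : ℂ :=
  lam ^ k / (Gamma (α * k + 1) : ℂ)

theorem mittagLeffler_zero (α : ℝ) : mittagLeffler α 1 0 = 1 := by
  rw [mittagLeffler, tsum_eq_single 0 fun k hk => by rw [zero_pow hk, zero_div]]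
  simp

section MittagLefflerSeries

variable {α : ℝ} (lam : ℂ)

theorem mittagLeffler_mul_rpow_eq_tsum {τ : ℝ} (hτ : 0 ≤ τ) :
    mittagLeffler α 1 (lam * (τ ^ α : ℝ)) =
      ∑' k, mittagLefflerCoeff α lam k * (τ ^ (α * k) : ℝ) := by
  refine tsum_congr fun k => ?_
  rw [mittagLefflerCoeff, rpow_mul_natCast hτ, Complex.ofReal_pow, mul_pow,
    ← Complex.Gamma_ofReal]
  push_cast
  ring

theorem norm_mittagLefflerCoeff (hα : 0 ≤ α) (k : ℕ) :
    ‖mittagLefflerCoeff α lam k‖ = ‖lam‖ ^ k / Gamma (α * k + 1) := by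
  rw [mittagLefflerCoeff, norm_div, norm_pow, Complex.norm_real,
    Real.norm_of_nonneg (Gamma_pos_of_pos (by positivity)).le]

theorem summable_norm_mittagLefflerCoeff_mul_rpow (hα : 0 < α) {τ : ℝ} (hτ : 0 ≤ τ) :
    Summable fun k => ‖mittagLefflerCoeff α lam k * (τ ^ (α * k) : ℝ)‖ := by
  refine (summable_pow_div_Gamma_mul_add_one hα (‖lam‖ * τ ^ α)).congr fun k => ?_
  rw [norm_mul, norm_mittagLefflerCoeff lam hα.le, Complex.norm_real,
    Real.norm_of_nonneg (by positivity), rpow_mul_natCast hτ]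
  ring

theorem mittagLeffler_mul_rpow_eq_one_add (hα : 0 < α) {τ : ℝ} (hτ : 0 ≤ τ) :
    mittagLeffler α 1 (lam * (τ ^ α : ℝ)) =
      1 + ∑' k, mittagLefflerCoeff α lam (k + 1) * (τ ^ (α * ↑(k + 1)) : ℝ) := by
  rw [mittagLeffler_mul_rpow_eq_tsum lam hτ,
    (summable_norm_mittagLefflerCoeff_mul_rpow lam hα hτ).of_norm.tsum_eq_zero_add]
  simp [mittagLefflerCoeff]

theorem mittagLefflerCoeff_succ_mul (hα : 0 ≤ α) (k : ℕ) (t : ℝ) :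
    mittagLefflerCoeff α lam (k + 1) *
        (Gamma (α * ↑(k + 1) + 1) / Gamma (α * ↑(k + 1) + 1 - α) * t ^ (α * ↑(k + 1) - α) : ℝ) =
      lam * (mittagLefflerCoeff α lam k * (t ^ (α * k) : ℝ)) := by
  have hΓ : (Gamma (α * ↑(k + 1) + 1) : ℂ) ≠ 0 :=
    Complex.ofReal_ne_zero.2 (Gamma_pos_of_pos (by positivity)).ne'
  have harg : α * ↑(k + 1) + 1 - α = α * k + 1 := by push_cast; ring
  have hexp : α * ↑(k + 1) - α = α * k := by push_cast; ring
  rw [mittagLefflerCoeff, mittagLefflerCoeff, harg, hexp, Complex.ofReal_mul, Complex.ofReal_div,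
    pow_succ]
  field_simp


theorem norm_mittagLefflerCoeff_succ_mul_deriv_rpow_le (hα : 0 < α) (k : ℕ) {m u R : ℝ}
    (hm : 0 < m) (hmu : m ≤ u) (huR : u ≤ R) :
    ‖mittagLefflerCoeff α lam (k + 1) * (α * ↑(k + 1) * u ^ (α * ↑(k + 1) - 1) : ℝ)‖ ≤
      α / m * ((2 * ‖lam‖ * R ^ α) ^ (k + 1) / Gamma (α * ↑(k + 1) + 1)) := by
  have hu : 0 < u := hm.trans_le hmu
  have hΓ : 0 < Gamma (α * ↑(k + 1) + 1) := Gamma_pos_of_pos (by positivity)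
  have hpow : u ^ (α * ↑(k + 1) - 1) ≤ (R ^ α) ^ (k + 1) / m := by
    rw [rpow_sub_one hu.ne', ← rpow_mul_natCast (hu.le.trans huR)]
    exact div_le_div₀ (rpow_nonneg (hu.le.trans huR) _) (rpow_le_rpow hu.le huR (by positivity))
      hm hmu
  have hk : ((k + 1 : ℕ) : ℝ) ≤ 2 ^ (k + 1) := by exact_mod_cast Nat.lt_two_pow_self.le
  rw [norm_mul, norm_mittagLefflerCoeff lam hα.le, Complex.norm_real,
    Real.norm_of_nonneg (by positivity), mul_pow, mul_pow]
  calc ‖lam‖ ^ (k + 1) / Gamma (α * ↑(k + 1) + 1) * (α * ↑(k + 1) * u ^ (α * ↑(k + 1) - 1))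
      ≤ ‖lam‖ ^ (k + 1) / Gamma (α * ↑(k + 1) + 1) *
          (α * 2 ^ (k + 1) * ((R ^ α) ^ (k + 1) / m)) := by gcongr
    _ = _ := by ring

theorem summable_mittagLefflerCoeff_succ_mul_deriv_rpow (hα : 0 < α) {τ : ℝ} (hτ : 0 < τ) :
    Summable fun k => mittagLefflerCoeff α lam (k + 1) *
      (α * ↑(k + 1) * τ ^ (α * ↑(k + 1) - 1) : ℝ) :=
  .of_norm_bounded
    (((summable_nat_add_iff 1).2 (summable_pow_div_Gamma_mul_add_one hα _)).mul_left _)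
    fun k => norm_mittagLefflerCoeff_succ_mul_deriv_rpow_le lam hα k hτ le_rfl le_rfl

theorem hasDerivAt_mittagLeffler_mul_rpow (hα : 0 < α) {τ : ℝ} (hτ : 0 < τ) :
    HasDerivAt (fun u => mittagLeffler α 1 (lam * (u ^ α : ℝ)))
      (∑' k, mittagLefflerCoeff α lam (k + 1) *
        (α * ↑(k + 1) * τ ^ (α * ↑(k + 1) - 1) : ℝ)) τ := by
  have hτmem : τ ∈ Ioo (τ / 2) (2 * τ) := ⟨by linarith, by linarith⟩
  have hseries := hasDerivAt_tsum_of_isPreconnected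
    (((summable_nat_add_iff 1).2 (summable_pow_div_Gamma_mul_add_one hα _)).mul_left _)
    isOpen_Ioo isPreconnected_Ioo
    (g := fun k u => mittagLefflerCoeff α lam (k + 1) * (u ^ (α * ↑(k + 1)) : ℝ))
    (fun k u hu => ((Real.hasDerivAt_rpow_const (Or.inl (by linarith [hu.1] : u ≠ 0))).ofReal_comp
      ).const_mul _)
    (fun k u hu => norm_mittagLefflerCoeff_succ_mul_deriv_rpow_le lam hα k (by positivity)
      hu.1.le hu.2.le)
    hτmem
    ((summable_nat_add_iff 1).2 (summable_norm_mittagLefflerCoeff_mul_rpow lam hα hτ.le)).of_norm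
    hτmem
  refine (hseries.const_add 1).congr_of_eventuallyEq ?_
  filter_upwards [lt_mem_nhds hτ] with u hu
  exact mittagLeffler_mul_rpow_eq_one_add lam hα hu.le

end MittagLefflerSeries

theorem caputoDerivReal_re_mul_mittagLeffler {α : ℝ} (hα₀ : 0 < α) (hα₁ : α < 1) (lam c : ℂ)
    {t : ℝ} (ht : 0 < t) :
    caputoDerivReal α (fun τ => (c * mittagLeffler α 1 (lam * (τ ^ α : ℝ))).re) t =
      (c * (lam * mittagLeffler α 1 (lam * (t ^ α : ℝ)))).re := by
  have hderiv : ∀ τ ∈ Ioc 0 t,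
      deriv (fun τ => (c * mittagLeffler α 1 (lam * (τ ^ α : ℝ))).re) τ =
        ∑' k, (c * mittagLefflerCoeff α lam (k + 1)).re *
          (α * ↑(k + 1) * τ ^ (α * ↑(k + 1) - 1)) := by
    intro τ hτ
    have hE := (hasDerivAt_mittagLeffler_mul_rpow lam hα₀ hτ.1).const_mul c
    refine (Complex.reCLM.hasFDerivAt.comp_hasDerivAt τ hE).deriv.trans ?_
    rw [Complex.reCLM_apply, ← tsum_mul_left,
      Complex.re_tsum ((summable_mittagLefflerCoeff_succ_mul_deriv_rpow lam hα₀ hτ.1).mul_left c)]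
    simp only [← mul_assoc, Complex.re_mul_ofReal]
  have hterm : ∀ k, (c * mittagLefflerCoeff α lam (k + 1)).re *
      (Gamma (α * ↑(k + 1) + 1) / Gamma (α * ↑(k + 1) + 1 - α) * t ^ (α * ↑(k + 1) - α)) =
        (c * lam * (mittagLefflerCoeff α lam k * (t ^ (α * k) : ℝ))).re := by
    intro k
    rw [← Complex.re_mul_ofReal, mul_assoc, mittagLefflerCoeff_succ_mul lam hα₀.le, mul_assoc]
  have hV : ∀ k : ℕ,
      0 ≤ Gamma (α * ↑(k + 1) + 1) / Gamma (α * ↑(k + 1) + 1 - α) * t ^ (α * ↑(k + 1) - α) := by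
    intro k
    have := Gamma_pos_of_pos (by positivity : 0 < α * ↑(k + 1) + 1)
    have := Gamma_pos_of_pos (by push_cast; nlinarith : 0 < α * ↑(k + 1) + 1 - α)
    positivity
  have hsum := summable_norm_mittagLefflerCoeff_mul_rpow lam hα₀ ht.le
  rw [caputoDerivReal_eq_tsum hα₁ ht (fun k => by positivity) hderiv, tsum_congr hterm,
    ← Complex.re_tsum (hsum.of_norm.mul_left _), tsum_mul_left,
    ← mittagLeffler_mul_rpow_eq_tsum lam ht.le, mul_assoc]
  refine .of_nonneg_of_le (fun k => mul_nonneg (abs_nonneg _) (hV k)) (fun k => ?_)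
    (hsum.mul_left ‖c * lam‖)
  rw [← abs_of_nonneg (hV k), ← abs_mul, hterm, ← norm_mul]
  exact Complex.abs_re_le_norm _

theorem caputo_complex_pair_solution_general (α : ℝ) (hα₀ : 0 < α) (hα₁ : α < 1)
    (a b : ℝ) (C₁ C₂ : ℝ) (lam : ℂ)
    (hlam : lam = (a : ℂ) + (b : ℂ) * Complex.I)
    (x y : ℝ → ℝ)
    (hx : ∀ t : ℝ, x t =
      C₁ * (mittagLeffler α 1 (lam * ((t ^ α : ℝ) : ℂ))).re +
        C₂ * (mittagLeffler α 1 (lam * ((t ^ α : ℝ) : ℂ))).im)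
    (hy : ∀ t : ℝ, y t =
      -C₁ * (mittagLeffler α 1 (lam * ((t ^ α : ℝ) : ℂ))).im +
        C₂ * (mittagLeffler α 1 (lam * ((t ^ α : ℝ) : ℂ))).re) :
    x 0 = C₁ ∧ y 0 = C₂ ∧
      ∀ t : ℝ, 0 < t →
        caputoDerivReal α x t = a * x t + b * y t ∧
          caputoDerivReal α y t = -b * x t + a * y t := by
  set c : ℂ := C₁ - C₂ * Complex.I
  have hx' : x = fun τ => (c * mittagLeffler α 1 (lam * (τ ^ α : ℝ))).re := by
    ext τ; simp [hx, c, Complex.mul_re]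
  have hy' : y = fun τ => (Complex.I * c * mittagLeffler α 1 (lam * (τ ^ α : ℝ))).re := by
    ext τ
    simp only [hy, c, Complex.mul_re, Complex.mul_im, Complex.I_re, Complex.I_im, Complex.sub_re,
      Complex.sub_im, Complex.ofReal_re, Complex.ofReal_im]
    ring
  have hE₀ : mittagLeffler α 1 (lam * ((0 : ℝ) ^ α : ℝ)) = 1 := by
    rw [zero_rpow hα₀.ne', Complex.ofReal_zero, mul_zero, mittagLeffler_zero]
  refine ⟨by simp [hx, hE₀], by simp [hy, hE₀], fun t ht => ?_⟩
  rw [hx', hy', caputoDerivReal_re_mul_mittagLeffler hα₀ hα₁ lam c ht,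
    caputoDerivReal_re_mul_mittagLeffler hα₀ hα₁ lam _ ht, hlam]
  constructor <;>
  · simp only [c, Complex.mul_re, Complex.mul_im, Complex.I_re, Complex.I_im, Complex.add_re,
      Complex.add_im, Complex.sub_re, Complex.sub_im, Complex.ofReal_re, Complex.ofReal_im]
    ring

/-- For `0 < α < 1`, `λ = a + ib` with `b ≠ 0`, the trajectory
`x(t) = C₁ Re(E_α(λt^α)) + C₂ Im(E_α(λt^α))`,
`y(t) = −C₁ Im(E_α(λt^α)) + C₂ Re(E_α(λt^α))` satisfies `x(0) = C₁`, `y(0) = C₂`, and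
for `t > 0`: `(₀^C D_t^α x)(t) = a x(t) + b y(t)` and
`(₀^C D_t^α y)(t) = −b x(t) + a y(t)`. -/
theorem caputo_complex_pair_solution (α : ℝ) (hα₀ : 0 < α) (hα₁ : α < 1)
    (a b : ℝ) (hb : b ≠ 0) (C₁ C₂ : ℝ) (lam : ℂ)
    (hlam : lam = (a : ℂ) + (b : ℂ) * Complex.I)
    (x y : ℝ → ℝ)
    (hx : ∀ t : ℝ, x t =
      C₁ * (mittagLeffler α 1 (lam * ((t ^ α : ℝ) : ℂ))).re +
        C₂ * (mittagLeffler α 1 (lam * ((t ^ α : ℝ) : ℂ))).im)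
    (hy : ∀ t : ℝ, y t =
      -C₁ * (mittagLeffler α 1 (lam * ((t ^ α : ℝ) : ℂ))).im +
        C₂ * (mittagLeffler α 1 (lam * ((t ^ α : ℝ) : ℂ))).re) :
    x 0 = C₁ ∧ y 0 = C₂ ∧
      ∀ t : ℝ, 0 < t →
        caputoDerivReal α x t = a * x t + b * y t ∧
          caputoDerivReal α y t = -b * x t + a * y t :=
  caputo_complex_pair_solution_general α hα₀ hα₁ a b C₁ C₂ lam hlam x y hx hy
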